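/- Let G be a group acting by isometries on a 1-hyperbolic geodesic metric space (X,d) with base point x ∈ X, and let g, h, f ∈ G. Then one of the following occurs. (1) There exist points p, q ∈ X and geodesic segments such that the path w_g = [x,p] ∪ [p,gx] has length at most |g|_x + 4, the path w_h = [gx,p] ∪ [p,q] ∪ [q,ghx] has length at most |h|_x + 4, the path w_f = [ghx,q] ∪ [q,ghfx] has length at most |f|_x + 4, and the path w_{ghf} = [x,p] ∪ [p,q] ∪ [q,ghfx] has length at most |ghf|_x + 4. (2) There exist points p, q ∈ X and geodesic segments such that the path w_g = [x,p] ∪ [p,q] ∪ [q,gx] has length at most |g|_x + 4, the path w_h = [gx,q] ∪ [q,ghx] has length at most |h|_x + 4, the path w_f = [ghx,q] ∪ [q,p] ∪ [p,ghfx] has length at most |f|_x + 4, the path w_{ghf} = [x,p] ∪ [p,ghfx] has length at most |ghf|_x + 4, the segment [p,q] lies in the 4-neighborhood of any geodesic segment [x,gx] and of any geodesic segment [ghx,ghfx], and the 5-neighborhood of [p,q] contains a subsegment of [x,gx] and a subsegment of gh[x,fx], each of length at least d(p,q). In both cases each of the paths w_g, w_h, w_f, w_{ghf} lies in the 4-neighborhood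 of any geodesic segment joining its endpoints; moreover p, q can be chosen so that for any point r as in Lemma 15 applied to the pair g, h (a point r with [x,r] ∪ [r,gx] of length ≤ |g|_x + 2, [gx,r] ∪ [r,ghx] of length ≤ |h|_x + 2 and [x,r] ∪ [r,ghx] of length ≤ |gh|_x + 2, each lying in the 2-neighborhood of geodesics joining its endpoints), in case (1): [x,r] lies in the 5-neighborhood of [x,p], [r,gx] lies in the 5-neighborhood of [p,gx], and [r,ghx] lies in the 5-neighborhood of [p,q] ∪ [q,ghx]; and in case (2): [x,r] lies in the 5-neighborhood of [x,p] ∪ [p,q], [r,gx] lies in the 5-neighborhood of [q,gx], and [r,ghx] lies in the 5-neighborhood of [q,ghx]. -/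

import Mathlib

set_option linter.unusedVariables false

/-- A geodesic segment from `a` to `b`: the image of an isometric
parameterization of the interval `[0, dist a b]`. -/
def IsGeodesicSegment {X : Type*} [MetricSpace X] (s : Set X) (a b : X) : Prop :=
  ∃ f : ℝ → X, f 0 = a ∧ f (dist a b) = b ∧
    (∀ t₁ ∈ Set.Icc (0 : ℝ) (dist a b), ∀ t₂ ∈ Set.Icc (0 : ℝ) (dist a b),
      dist (f t₁) (f t₂) = |t₁ - t₂|) ∧
    s = f '' Set.Icc (0 : ℝ) (dist a b)

/-- A geodesic metric space: any two points are joined by a geodesic segment. -/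
def GeodesicSpace (X : Type*) [MetricSpace X] : Prop :=
  ∀ a b : X, ∃ s : Set X, IsGeodesicSegment s a b

/-- `A` is contained in the `r`-neighborhood of `B`. -/
def InNbhd {X : Type*} [MetricSpace X] (A B : Set X) (r : ℝ) : Prop :=
  ∀ p ∈ A, ∃ q ∈ B, dist p q ≤ r

/-- `δ`-hyperbolicity: every geodesic triangle is `δ`-thin, i.e. each side is
contained in the `δ`-neighborhood of the union of the other two sides. -/
def DeltaHyperbolic (X : Type*) [MetricSpace X] (δ : ℝ) : Prop :=
  ∀ a b c : X, ∀ sab sac sbc : Set X,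
    IsGeodesicSegment sab a b → IsGeodesicSegment sac a c → IsGeodesicSegment sbc b c →
    InNbhd sab (sac ∪ sbc) δ

/-- Elementary Nielsen moves on an `n`-tuple of elements of a group. -/
inductive NielsenMove {G : Type*} [Group G] {n : ℕ} : (Fin n → G) → (Fin n → G) → Prop
  | inv (g : Fin n → G) (i : Fin n) : NielsenMove g (Function.update g i (g i)⁻¹)
  | mul (g : Fin n → G) (i j : Fin n) (hij : i ≠ j) :
      NielsenMove g (Function.update g i (g i * g j))
  | swap (g : Fin n → G) (i j : Fin n) (hij : i ≠ j) :
      NielsenMove g (g ∘ Equiv.swap i j)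

/-- Nielsen equivalence: a finite chain of elementary Nielsen moves. -/
def NielsenEquiv {G : Type*} [Group G] {n : ℕ} (M M' : Fin n → G) : Prop :=
  Relation.ReflTransGen NielsenMove M M'

/-- The word metric on the free group `F(x_1, …, x_n)`:
the length of the reduced word representing `w⁻¹ * v`. -/
noncomputable def freeDist {n : ℕ} (w v : FreeGroup (Fin n)) : ℝ :=
  ((w⁻¹ * v).toWord.length : ℝ)

/-- The orbit map (on the subgroup generated by the tuple `g`, identified with
a quotient of the free group via `FreeGroup.lift g`) is a quasi-isometric embedding
with respect to the word metric of the basis `g`. -/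
def OrbitQIEmbed {G X : Type*} [Group G] [MetricSpace X] [MulAction G X]
    {n : ℕ} (x : X) (g : Fin n → G) : Prop :=
  ∃ lam eps : ℝ, 1 ≤ lam ∧ 0 ≤ eps ∧ ∀ w v : FreeGroup (Fin n),
    lam⁻¹ * freeDist w v - eps ≤ dist ((FreeGroup.lift g w) • x) ((FreeGroup.lift g v) • x) ∧
    dist ((FreeGroup.lift g w) • x) ((FreeGroup.lift g v) • x) ≤ lam * freeDist w v + eps

/-- The sum of the displacements `|g_i|_x` of the members of a tuple. -/
noncomputable def tupleLen {G X : Type*} [Group G] [MetricSpace X] [MulAction G X]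
    {n : ℕ} (x : X) (M : Fin n → G) : ℝ :=
  ∑ i, dist x (M i • x)

/-- A minimal tuple: `|M|_x ≤ |M'|_x + 1` for every Nielsen-equivalent tuple `M'`. -/
def MinimalTuple {G X : Type*} [Group G] [MetricSpace X] [MulAction G X]
    {n : ℕ} (x : X) (M : Fin n → G) : Prop :=
  ∀ M' : Fin n → G, NielsenEquiv M M' → tupleLen x M ≤ tupleLen x M' + 1

/-- A freely reduced word in letters `(i, ±1)`: no letter is followed by its inverse. -/
def ReducedWord {n : ℕ} (l : List (Fin n × Bool)) : Prop :=
  l.Chain' fun a b => a.1 = b.1 → a.2 = b.2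

/-- The element of `G` represented by a word in the tuple `g` and its inverses. -/
def wordProd {G : Type*} [Group G] {n : ℕ} (g : Fin n → G) (l : List (Fin n × Bool)) : G :=
  (l.map fun p => if p.2 then g p.1 else (g p.1)⁻¹).prod

/-- Conclusion (2): for freely reduced `u = g_{i_1}^{ε_1} ⋯ g_{i_k}^{ε_k}`, any geodesic
`[x, ux]` lies in the `d`-neighborhood of the broken path
`[x, g_{i_1}^{ε_1} x] ∪ ⋯ ∪ g_{i_1}^{ε_1} ⋯ g_{i_{k-1}}^{ε_{k-1}} [x, g_{i_k}^{ε_k} x]`. -/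
def BrokenPathNbhd {G X : Type*} [Group G] [MetricSpace X] [MulAction G X]
    {n : ℕ} (x : X) (g : Fin n → G) (d : ℝ) : Prop :=
  ∀ l : List (Fin n × Bool), l ≠ [] → ReducedWord l →
    ∀ S : Set X, IsGeodesicSegment S x (wordProd g l • x) →
    ∀ seg : ℕ → Set X,
      (∀ j < l.length, IsGeodesicSegment (seg j)
        (wordProd g (l.take j) • x) (wordProd g (l.take (j + 1)) • x)) →
      ∀ p ∈ S, ∃ j < l.length, ∃ q ∈ seg j, dist p q ≤ d

/-- For freely reduced `u`, any geodesic `[x, ux]` lies in the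
`max_i (|g_i|_x/2 + d)`-neighborhood of the orbit `Ux`. -/
def SegInOrbitNbhd {G X : Type*} [Group G] [MetricSpace X] [MulAction G X]
    {n : ℕ} (x : X) (g : Fin n → G) (d : ℝ) : Prop :=
  ∀ l : List (Fin n × Bool), l ≠ [] → ReducedWord l →
    ∀ S : Set X, IsGeodesicSegment S x (wordProd g l • x) →
    ∀ p ∈ S, ∃ (w : FreeGroup (Fin n)) (i : Fin n),
      dist p ((FreeGroup.lift g w) • x) ≤ dist x (g i • x) / 2 + d

/-- Conclusion (3): for freely reduced `u = g_{i_1}^{ε_1} ⋯ g_{i_k}^{ε_k}` one has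
`|u|_x ≥ |g_{i_j}|_x - d` for every letter occurring in `u`. -/
def LetterBound {G X : Type*} [Group G] [MetricSpace X] [MulAction G X]
    {n : ℕ} (x : X) (g : Fin n → G) (d : ℝ) : Prop :=
  ∀ l : List (Fin n × Bool), ReducedWord l → ∀ j : Fin l.length,
    dist x (g (l.get j).1 • x) - d ≤ dist x (wordProd g l • x)

/-- Conclusion (4): every subsegment of a geodesic `[x, ux]`, `u ∈ U`, of length
greater than `d₄` meets the `max_i (|g_i|_x/2 - c)`-neighborhood of the orbit `Ux`. -/
def SubsegMeetsOrbit {G X : Type*} [Group G] [MetricSpace X] [MulAction G X]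
    {n : ℕ} (x : X) (g : Fin n → G) (d₄ c : ℝ) : Prop :=
  ∀ w : FreeGroup (Fin n), ∀ S : Set X, IsGeodesicSegment S x ((FreeGroup.lift g w) • x) →
    ∀ a ∈ S, ∀ b ∈ S, ∀ τ : Set X, IsGeodesicSegment τ a b → τ ⊆ S → d₄ < dist a b →
    ∃ p ∈ τ, ∃ (v : FreeGroup (Fin n)) (i : Fin n),
      dist p ((FreeGroup.lift g v) • x) ≤ dist x (g i • x) / 2 - c

/-- The dichotomy of Theorem 11 for an `(m+1)`-tuple `f` at base point `x`, with
constants `d₁, d₂, d₃, d₄` and parameter `c`. -/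
def Thm11Alt {G X : Type*} [Group G] [MetricSpace X] [MulAction G X]
    {m : ℕ} (x : X) (f : Fin (m + 1) → G) (d₁ d₂ d₃ d₄ c : ℝ) : Prop :=
  (∃ f' : Fin (m + 1) → G, NielsenEquiv f f' ∧ (⨅ y : X, dist y (f' 0 • y)) ≤ d₁) ∨
  (Function.Injective ⇑(FreeGroup.lift f) ∧ OrbitQIEmbed x f ∧ BrokenPathNbhd x f d₂ ∧
    SegInOrbitNbhd x f d₂ ∧ LetterBound x f d₃ ∧ SubsegMeetsOrbit x f d₄ c)

/-- A naturally parameterized `(λ, ε)`-quasigeodesic on the set `I ⊆ ℝ`. -/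
def IsQuasigeodesicOn {X : Type*} [MetricSpace X] (α : ℝ → X) (I : Set ℝ)
    (lam eps : ℝ) : Prop :=
  (∀ s ∈ I, ∀ t ∈ I, dist (α s) (α t) ≤ |s - t|) ∧
  (∀ s ∈ I, ∀ t ∈ I, |s - t| ≤ lam * dist (α s) (α t) + eps)

/-- A naturally parameterized `T`-local `(λ, ε)`-quasigeodesic on the set `I ⊆ ℝ`. -/
def IsLocalQuasigeodesicOn {X : Type*} [MetricSpace X] (α : ℝ → X) (I : Set ℝ)
    (T lam eps : ℝ) : Prop :=
  (∀ s ∈ I, ∀ t ∈ I, dist (α s) (α t) ≤ |s - t|) ∧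
  (∀ s ∈ I, ∀ t ∈ I, |s - t| ≤ T → |s - t| ≤ lam * dist (α s) (α t) + eps)

/-- The data provided by Lemma 15 for the pair `(g, h)`: a point `r` together with
geodesic segments `[x,r]`, `[r,gx]`, `[r,ghx]` such that the broken paths
`w_g = [x,r] ∪ [r,gx]`, `w_h = [gx,r] ∪ [r,ghx]`, `w_{gh} = [x,r] ∪ [r,ghx]` have
lengths at most `|g|_x + 2`, `|h|_x + 2`, `|gh|_x + 2` respectively and each lies in
the `2`-neighborhood of any geodesic segment joining its endpoints. -/
def Lemma15Data {G X : Type*} [Group G] [MetricSpace X] [MulAction G X]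
    (x : X) (g h : G) (r : X) (sxr srg srgh : Set X) : Prop :=
  IsGeodesicSegment sxr x r ∧ IsGeodesicSegment srg r (g • x) ∧
  IsGeodesicSegment srgh r ((g * h) • x) ∧
  dist x r + dist r (g • x) ≤ dist x (g • x) + 2 ∧
  dist (g • x) r + dist r ((g * h) • x) ≤ dist x (h • x) + 2 ∧
  dist x r + dist r ((g * h) • x) ≤ dist x ((g * h) • x) + 2 ∧
  (∀ S : Set X, IsGeodesicSegment S x (g • x) → InNbhd (sxr ∪ srg) S 2) ∧
  (∀ S : Set X, IsGeodesicSegment S (g • x) ((g * h) • x) → InNbhd (srg ∪ srgh) S 2) ∧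
  (∀ S : Set X, IsGeodesicSegment S x ((g * h) • x) → InNbhd (sxr ∪ srgh) S 2)

/-- Conclusion (4) of Proposition 13, for products
`w = h₁ gₙ^{ε₁} h₂ gₙ^{ε₂} ⋯ hₗ gₙ^{εₗ} h_{l+1}` with `hᵢ ∈ H`. -/
def Prop13Four {G X : Type*} [Group G] [MetricSpace X] [MulAction G X]
    (x : X) (H : Subgroup G) (gn : G) (T L : ℝ) : Prop :=
  ∀ l : ℕ, 1 ≤ l → ∀ (h : ℕ → G) (e : ℕ → ℤ),
    (∀ i ≤ l, h i ∈ H) →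
    (∀ i < l, e i = 1 ∨ e i = -1) →
    (∀ i, 1 ≤ i → i < l → e (i - 1) = -(e i) → h i ≠ 1) →
    ∀ A : ℕ → G, A 0 = 1 → (∀ i < l, A (i + 1) = A i * h i * gn ^ (e i)) →
    ∀ S : Set X, IsGeodesicSegment S x ((A l * h l) • x) →
    ∀ a ∈ S, ∀ b ∈ S, ∀ I : Set X, IsGeodesicSegment I a b → I ⊆ S → 10 * T ≤ dist a b →
    ∃ u v : G,
      ((∃ j < l, u = A j * h j ∧ v = A j * h j * gn ^ (e j)) ∨
        (∃ j ≤ l, u = A j ∧ v = A j * h j)) ∧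
      ∃ Seg : Set X, IsGeodesicSegment Seg (u • x) (v • x) ∧
        ∃ a' ∈ Seg, ∃ b' ∈ Seg, ∃ τ : Set X, IsGeodesicSegment τ a' b' ∧ τ ⊆ Seg ∧
          T ≤ dist a' b' ∧ InNbhd τ I (2 * L + 100)

/-!
Put `x₀, x₁, x₂, x₃ = x, gx, ghx, ghfx`, fix a geodesic `γ` from `x₀` to `x₂`, and let
`a = (x₁ | x₂)_{x₀}` and `b = (x₂ | x₃)_{x₀}` be Gromov products. The points `p, q` are `γ a` and
`γ b`, taken in their order along `γ`: `a ≤ b` gives the first kind of quadrilateral, `b ≤ a`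
the second.

Thinness of triangles puts `γ t` within `d(x₀, x₁) - t + 2` of `x₁` for `t ≤ a`, and likewise
for `x₃`; so each of the four broken paths is at most `2` longer than the displacement it
represents. A point of a broken path of excess `K` over `d(u, v)` lies within `K / 2 + 2` of
every geodesic `[u, v]`, which gives the `4`-neighbourhoods. Two geodesics issuing from `x₀`
stay `4`-close up to the Gromov product of their endpoints, which gives the long subsegments
of the second case. Finally a Lemma 15 point `r` lies within `4` of `γ a`, so the legs of its
tripod stay close to the sides of the quadrilateral.
-/

section ThinQuadrilaterals

open Set Metric

variable {X : Type*} [MetricSpace X]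

structure IsGeodesicPath (γ : ℝ → X) (a b : X) : Prop where
  map_zero : γ 0 = a
  map_dist : γ (dist a b) = b
  dist_eq : ∀ s ∈ Icc 0 (dist a b), ∀ t ∈ Icc 0 (dist a b), dist (γ s) (γ t) = |s - t|

namespace IsGeodesicPath

variable {γ : ℝ → X} {a b : X} {s t : ℝ}

lemma dist_left (hγ : IsGeodesicPath γ a b) (ht : t ∈ Icc 0 (dist a b)) : dist a (γ t) = t := by
  rw [← hγ.map_zero, hγ.dist_eq 0 ⟨le_rfl, dist_nonneg⟩ t ht, zero_sub, abs_neg,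
    abs_of_nonneg ht.1]

lemma dist_right (hγ : IsGeodesicPath γ a b) (ht : t ∈ Icc 0 (dist a b)) :
    dist (γ t) b = dist a b - t := by
  rw [← hγ.map_dist, hγ.dist_eq t ht _ ⟨dist_nonneg, le_rfl⟩, abs_of_nonpos (by linarith [ht.2]),
    hγ.map_dist]
  ring

lemma dist_map_of_le (hγ : IsGeodesicPath γ a b) (hs : 0 ≤ s) (hst : s ≤ t)
    (ht : t ≤ dist a b) : dist (γ s) (γ t) = t - s := by
  rw [hγ.dist_eq s ⟨hs, hst.trans ht⟩ t ⟨hs.trans hst, ht⟩, abs_of_nonpos (by linarith)]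
  ring

lemma isGeodesicSegment (hγ : IsGeodesicPath γ a b) :
    IsGeodesicSegment (γ '' Icc 0 (dist a b)) a b :=
  ⟨γ, hγ.map_zero, hγ.map_dist, hγ.dist_eq, rfl⟩

lemma isGeodesicSegment_Icc (hγ : IsGeodesicPath γ a b) (hs : 0 ≤ s) (hst : s ≤ t)
    (ht : t ≤ dist a b) : IsGeodesicSegment (γ '' Icc s t) (γ s) (γ t) := by
  have hd := hγ.dist_map_of_le hs hst ht
  refine ⟨fun u => γ (s + u), by simp, by simp [hd], ?_, ?_⟩
  · intro u hu v hv
    rw [hd] at hu hv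
    rw [hγ.dist_eq _ ⟨by linarith [hu.1], by linarith [hu.2]⟩ _
      ⟨by linarith [hv.1], by linarith [hv.2]⟩, add_sub_add_left_eq_sub]
  · rw [hd, ← image_image (g := γ) (f := (s + ·)), image_const_add_Icc, add_zero,
      add_sub_cancel]

lemma reverse (hγ : IsGeodesicPath γ a b) : IsGeodesicPath (fun t => γ (dist a b - t)) b a := by
  refine ⟨by simpa using hγ.map_dist, by simpa [dist_comm b a] using hγ.map_zero,
    fun u hu v hv => ?_⟩
  rw [dist_comm b a] at hu hv
  rw [hγ.dist_eq _ ⟨by linarith [hu.2], by linarith [hu.1]⟩ _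
    ⟨by linarith [hv.2], by linarith [hv.1]⟩, sub_sub_sub_cancel_left, abs_sub_comm]

lemma continuousOn (hγ : IsGeodesicPath γ a b) : ContinuousOn γ (Icc 0 (dist a b)) :=
  (LipschitzOnWith.mk_one fun u hu v hv => by rw [hγ.dist_eq u hu v hv, Real.dist_eq]).continuousOn

end IsGeodesicPath

lemma GeodesicSpace.exists_isGeodesicPath (hgeo : GeodesicSpace X) (a b : X) :
    ∃ γ : ℝ → X, IsGeodesicPath γ a b := by
  obtain ⟨-, γ, h0, h1, h2, -⟩ := hgeo a b
  exact ⟨γ, h0, h1, h2⟩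

namespace IsGeodesicSegment

variable {s S : Set X} {a b c : X}

lemma exists_isGeodesicPath (h : IsGeodesicSegment s a b) :
    ∃ γ : ℝ → X, IsGeodesicPath γ a b ∧ s = γ '' Icc 0 (dist a b) := by
  obtain ⟨γ, h0, h1, h2, rfl⟩ := h
  exact ⟨γ, ⟨h0, h1, h2⟩, rfl⟩

lemma symm (h : IsGeodesicSegment s a b) : IsGeodesicSegment s b a := by
  obtain ⟨γ, hγ, rfl⟩ := h.exists_isGeodesicPath
  convert hγ.reverse.isGeodesicSegment using 1
  rw [dist_comm b a, ← image_image (g := γ) (f := (dist a b - ·)), image_const_sub_Icc, sub_zero,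
    sub_self]

lemma left_mem (h : IsGeodesicSegment s a b) : a ∈ s := by
  obtain ⟨γ, hγ, rfl⟩ := h.exists_isGeodesicPath
  exact ⟨0, ⟨le_rfl, dist_nonneg⟩, hγ.map_zero⟩

lemma dist_add_dist (h : IsGeodesicSegment s a b) (hc : c ∈ s) :
    dist a c + dist c b = dist a b := by
  obtain ⟨γ, hγ, rfl⟩ := h.exists_isGeodesicPath
  obtain ⟨t, ht, rfl⟩ := hc
  rw [hγ.dist_left ht, hγ.dist_right ht, add_sub_cancel]

lemma dist_add_dist_le (h : IsGeodesicSegment s a b) (hc : c ∈ s) (u v : X) :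
    dist u c + dist c v ≤ dist u a + dist a b + dist b v := by
  rw [← h.dist_add_dist hc]
  linarith [dist_triangle u a c, dist_triangle c b v]

lemma isCompact (h : IsGeodesicSegment s a b) : IsCompact s := by
  obtain ⟨γ, hγ, rfl⟩ := h.exists_isGeodesicPath
  exact isCompact_Icc.image_of_continuousOn hγ.continuousOn

end IsGeodesicSegment

lemma InNbhd.mono {A A' B B' : Set X} {r r' : ℝ} (h : InNbhd A B r) (hA : A' ⊆ A) (hB : B ⊆ B')
    (hr : r ≤ r') : InNbhd A' B' r' := fun p hp => by
  obtain ⟨q, hq, hpq⟩ := h p (hA hp)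
  exact ⟨q, hB hq, hpq.trans hr⟩

lemma inNbhd_self (A : Set X) {r : ℝ} (hr : 0 ≤ r) : InNbhd A A r :=
  fun p hp => ⟨p, hp, by rwa [dist_self]⟩

noncomputable def gromovProduct (o y z : X) : ℝ := (dist o y + dist o z - dist y z) / 2

lemma two_mul_gromovProduct (o y z : X) :
    2 * gromovProduct o y z = dist o y + dist o z - dist y z := by
  unfold gromovProduct
  ring

lemma gromovProduct_comm (o y z : X) : gromovProduct o y z = gromovProduct o z y := by
  simp only [gromovProduct, dist_comm y z, add_comm (dist o y)]

lemma gromovProduct_nonneg (o y z : X) : 0 ≤ gromovProduct o y z := by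
  unfold gromovProduct
  linarith [dist_triangle y o z, dist_comm y o]

lemma gromovProduct_le_dist_left (o y z : X) : gromovProduct o y z ≤ dist o y := by
  unfold gromovProduct
  linarith [dist_triangle o y z]

lemma gromovProduct_le_dist_right (o y z : X) : gromovProduct o y z ≤ dist o z := by
  rw [gromovProduct_comm]
  exact gromovProduct_le_dist_left o z y

lemma IsGeodesicSegment.dist_le_of_mem_of_dist_le {S : Set X} {u w e y : X} {δ : ℝ}
    (hS : IsGeodesicSegment S u w) (he : e ∈ S) (hy : dist y e ≤ δ) :
    dist w y ≤ dist u w - dist u y + 2 * δ := by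
  linarith [hS.dist_add_dist he, dist_triangle w e y, dist_triangle u e y, dist_comm e w,
    dist_comm e y]

section Hyperbolic

variable {δ : ℝ} {γ : ℝ → X} {u v : X}

lemma IsGeodesicPath.dist_le_max (hgeo : GeodesicSpace X) (hhyp : DeltaHyperbolic X δ)
    (hγ : IsGeodesicPath γ u v) (w : X) {t : ℝ} (ht : t ∈ Icc 0 (dist u v)) :
    dist w (γ t) ≤ max (dist u w - t) (dist w v - (dist u v - t)) + 2 * δ := by
  obtain ⟨S₁, hS₁⟩ := hgeo u w
  obtain ⟨S₂, hS₂⟩ := hgeo v w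
  obtain ⟨e, he | he, hte⟩ := hhyp u v w _ S₁ S₂ hγ.isGeodesicSegment hS₁ hS₂ (γ t) ⟨t, ht, rfl⟩
  · have := hS₁.dist_le_of_mem_of_dist_le he hte
    rw [hγ.dist_left ht] at this
    linarith [le_max_left (dist u w - t) (dist w v - (dist u v - t))]
  · have := hS₂.dist_le_of_mem_of_dist_le he hte
    rw [dist_comm v (γ t), hγ.dist_right ht] at this
    linarith [le_max_right (dist u w - t) (dist w v - (dist u v - t)), dist_comm v w]

lemma IsGeodesicPath.dist_le_of_le_gromovProduct (hgeo : GeodesicSpace X)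
    (hhyp : DeltaHyperbolic X δ) (hγ : IsGeodesicPath γ u v) {w : X} {t : ℝ} (ht₀ : 0 ≤ t)
    (ht : t ≤ gromovProduct u w v) : dist w (γ t) ≤ dist u w - t + 2 * δ := by
  have := hγ.dist_le_max hgeo hhyp w ⟨ht₀, ht.trans (gromovProduct_le_dist_right u w v)⟩
  rwa [max_eq_left (by linarith [two_mul_gromovProduct u w v])] at this

lemma IsGeodesicPath.exists_dist_le (hgeo : GeodesicSpace X) (hhyp : DeltaHyperbolic X δ)
    (hγ : IsGeodesicPath γ u v) (c : X) :
    ∃ s ∈ Icc 0 (dist u v), dist c (γ s) ≤ dist u c - s + 2 * δ ∧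
      dist c (γ s) ≤ dist c v - (dist u v - s) + 2 * δ := by
  obtain ⟨S₁, hS₁⟩ := hgeo u c
  obtain ⟨S₂, hS₂⟩ := hgeo v c
  have hthin := hhyp u v c _ S₁ S₂ hγ.isGeodesicSegment hS₁ hS₂
  have hclosed (S : Set X) : IsClosed (Icc 0 (dist u v) ∩ ((infDist · S) ∘ γ) ⁻¹' Iic δ) :=
    ((continuous_infDist_pt S).comp_continuousOn hγ.continuousOn).preimage_isClosed_of_isClosed
      isClosed_Icc isClosed_Iic
  have h₀ : (0 : ℝ) ∈ Icc 0 (dist u v) := left_mem_Icc.2 dist_nonneg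
  have hL : dist u v ∈ Icc 0 (dist u v) := right_mem_Icc.2 dist_nonneg
  obtain ⟨e₀, -, he₀⟩ := hthin (γ 0) ⟨0, h₀, rfl⟩
  have hδ : 0 ≤ δ := dist_nonneg.trans he₀
  -- The parameters `δ`-close to `[u, c]` and those `δ`-close to `[v, c]` are closed and cover
  -- the interval, so by connectedness some `σ` is `δ`-close to both sides.
  obtain ⟨σ, hσ, ⟨-, hσ₁ : infDist (γ σ) S₁ ≤ δ⟩, ⟨-, hσ₂ : infDist (γ σ) S₂ ≤ δ⟩⟩ :=
    isPreconnected_closed_iff.1 isPreconnected_Icc _ _ (hclosed S₁) (hclosed S₂)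
      (fun t ht => by
        obtain ⟨e, he | he, hte⟩ := hthin (γ t) ⟨t, ht, rfl⟩
        · exact Or.inl ⟨ht, (infDist_le_dist_of_mem he).trans hte⟩
        · exact Or.inr ⟨ht, (infDist_le_dist_of_mem he).trans hte⟩)
      ⟨0, h₀, h₀, by simpa [hγ.map_zero, infDist_zero_of_mem hS₁.left_mem] using hδ⟩
      ⟨_, hL, hL, by simpa [hγ.map_dist, infDist_zero_of_mem hS₂.left_mem] using hδ⟩
  obtain ⟨e₁, he₁, hd₁⟩ := hS₁.isCompact.exists_infDist_eq_dist ⟨u, hS₁.left_mem⟩ (γ σ)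
  obtain ⟨e₂, he₂, hd₂⟩ := hS₂.isCompact.exists_infDist_eq_dist ⟨v, hS₂.left_mem⟩ (γ σ)
  have h₁ := hS₁.dist_le_of_mem_of_dist_le he₁ (hd₁ ▸ hσ₁)
  have h₂ := hS₂.dist_le_of_mem_of_dist_le he₂ (hd₂ ▸ hσ₂)
  rw [hγ.dist_left hσ] at h₁
  rw [dist_comm v (γ σ), hγ.dist_right hσ, dist_comm v c] at h₂
  exact ⟨σ, hσ, by linarith, by linarith⟩

lemma IsGeodesicSegment.inNbhd_of_forall_dist_add_dist_le (hgeo : GeodesicSpace X)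
    (hhyp : DeltaHyperbolic X δ) {S W : Set X} {K r : ℝ} (hS : IsGeodesicSegment S u v)
    (hW : ∀ c ∈ W, dist u c + dist c v ≤ dist u v + K) (hr : K / 2 + 2 * δ ≤ r) :
    InNbhd W S r := by
  obtain ⟨γ, hγ, rfl⟩ := hS.exists_isGeodesicPath
  intro c hc
  obtain ⟨s, hs, h₁, h₂⟩ := hγ.exists_dist_le hgeo hhyp c
  exact ⟨γ s, ⟨s, hs, rfl⟩, by linarith [hW c hc]⟩

lemma inNbhd_union_of_dist_add_dist_le (hgeo : GeodesicSpace X) (hhyp : DeltaHyperbolic X δ)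
    {A B : Set X} {p : X} {K r : ℝ} (hA : IsGeodesicSegment A u p) (hB : IsGeodesicSegment B p v)
    (hlen : dist u p + dist p v ≤ dist u v + K) (hr : K / 2 + 2 * δ ≤ r) :
    ∀ S : Set X, IsGeodesicSegment S u v → InNbhd (A ∪ B) S r := by
  refine fun S hS => hS.inNbhd_of_forall_dist_add_dist_le hgeo hhyp ?_ hr
  rintro c (hc | hc)
  · linarith [hA.dist_add_dist_le hc u v, dist_self u]
  · linarith [hB.dist_add_dist_le hc u v, dist_self v]

lemma inNbhd_union_union_of_dist_add_dist_add_dist_le (hgeo : GeodesicSpace X)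
    (hhyp : DeltaHyperbolic X δ) {A B C : Set X} {p q : X} {K r : ℝ}
    (hA : IsGeodesicSegment A u p) (hB : IsGeodesicSegment B p q) (hC : IsGeodesicSegment C q v)
    (hlen : dist u p + dist p q + dist q v ≤ dist u v + K) (hr : K / 2 + 2 * δ ≤ r) :
    ∀ S : Set X, IsGeodesicSegment S u v → InNbhd (A ∪ B ∪ C) S r := by
  refine fun S hS => hS.inNbhd_of_forall_dist_add_dist_le hgeo hhyp ?_ hr
  rintro c ((hc | hc) | hc)
  · linarith [hA.dist_add_dist_le hc u v, dist_self u, dist_triangle p q v]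
  · linarith [hB.dist_add_dist_le hc u v]
  · linarith [hC.dist_add_dist_le hc u v, dist_self v, dist_triangle u p q]

lemma IsGeodesicSegment.inNbhd_of_dist_le (hgeo : GeodesicSpace X) (hhyp : DeltaHyperbolic X δ)
    {s S B : Set X} {r z p : X} {k ρ : ℝ} (hs : IsGeodesicSegment s r z)
    (hS : IsGeodesicSegment S p z) (hSB : InNbhd S B k) (hpB : p ∈ B) (hrp : dist r p ≤ k)
    (hρ : δ + k ≤ ρ) : InNbhd s B ρ := by
  obtain ⟨R, hR⟩ := hgeo r p
  intro c hc
  obtain ⟨e, he | he, hce⟩ := hhyp r z p s R S hs hR hS.symm c hc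
  · exact ⟨p, hpB, by
      linarith [dist_triangle c e p, hR.dist_add_dist he, dist_nonneg (x := r) (y := e)]⟩
  · obtain ⟨m, hm, hem⟩ := hSB e he
    exact ⟨m, hm, by linarith [dist_triangle c e m]⟩

lemma IsGeodesicPath.dist_map_le_of_le_gromovProduct (hgeo : GeodesicSpace X)
    (hhyp : DeltaHyperbolic X δ) {η : ℝ → X} {o y z : X} (hγ : IsGeodesicPath γ o y)
    (hη : IsGeodesicPath η o z) {t : ℝ} (ht₀ : 0 ≤ t) (ht : t ≤ gromovProduct o y z) :
    dist (η t) (γ t) ≤ 4 * δ := by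
  have htγ : t ∈ Icc 0 (dist o y) := ⟨ht₀, ht.trans (gromovProduct_le_dist_left o y z)⟩
  obtain ⟨s, hs, h₁, h₂⟩ := hγ.exists_dist_le hgeo hhyp (η t)
  rw [hη.dist_left ⟨ht₀, ht.trans (gromovProduct_le_dist_right o y z)⟩] at h₁
  have hy := hη.dist_le_of_le_gromovProduct hgeo hhyp ht₀ ht
  have hst := dist_triangle (η t) (γ s) (γ t)
  rw [hγ.dist_eq s hs t htγ] at hst
  rcases le_total s t with h | h
  · linarith [abs_of_nonpos (sub_nonpos.2 h), dist_comm y (η t)]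
  · linarith [abs_of_nonneg (sub_nonneg.2 h), dist_nonneg (x := η t) (y := γ s), dist_comm y (η t)]

lemma IsGeodesicPath.exists_subsegment_inNbhd (hgeo : GeodesicSpace X)
    (hhyp : DeltaHyperbolic X δ) {o y : X} (hγ : IsGeodesicPath γ o y) (z : X) {s t ℓ ρ : ℝ}
    {C : Set X} (hs : 0 ≤ s) (hst : s ≤ t) (ht : t ≤ gromovProduct o y z) (hℓ : ℓ ≤ t - s)
    (hC : γ '' Icc s t ⊆ C) (hρ : 4 * δ ≤ ρ) :
    ∃ Sz : Set X, IsGeodesicSegment Sz o z ∧ ∃ a' ∈ Sz, ∃ b' ∈ Sz, ∃ τ : Set X,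
      IsGeodesicSegment τ a' b' ∧ τ ⊆ Sz ∧ ℓ ≤ dist a' b' ∧ InNbhd τ C ρ := by
  obtain ⟨η, hη⟩ := hgeo.exists_isGeodesicPath o z
  have htz : t ≤ dist o z := ht.trans (gromovProduct_le_dist_right o y z)
  have hsub : η '' Icc s t ⊆ η '' Icc 0 (dist o z) := image_mono (Icc_subset_Icc hs htz)
  refine ⟨_, hη.isGeodesicSegment, η s, hsub ⟨s, left_mem_Icc.2 hst, rfl⟩,
    η t, hsub ⟨t, right_mem_Icc.2 hst, rfl⟩, _, hη.isGeodesicSegment_Icc hs hst htz, hsub,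
    by rwa [hη.dist_map_of_le hs hst htz], ?_⟩
  rintro _ ⟨r, hr, rfl⟩
  exact ⟨γ r, hC ⟨r, hr, rfl⟩,
    (hγ.dist_map_le_of_le_gromovProduct hgeo hhyp hη (hs.trans hr.1) (hr.2.trans ht)).trans hρ⟩

lemma IsGeodesicPath.exists_subsegment_inNbhd_rev (hgeo : GeodesicSpace X)
    (hhyp : DeltaHyperbolic X δ) {o y : X} (hγ : IsGeodesicPath γ o y) (z : X) {s t ℓ ρ : ℝ}
    {C : Set X} (hs : 0 ≤ s) (hst : s ≤ t) (ht : t ≤ dist o y)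
    (hs' : dist o y - s ≤ gromovProduct y o z) (hℓ : ℓ ≤ t - s) (hC : γ '' Icc s t ⊆ C)
    (hρ : 4 * δ ≤ ρ) :
    ∃ Sz : Set X, IsGeodesicSegment Sz y z ∧ ∃ a' ∈ Sz, ∃ b' ∈ Sz, ∃ τ : Set X,
      IsGeodesicSegment τ a' b' ∧ τ ⊆ Sz ∧ ℓ ≤ dist a' b' ∧ InNbhd τ C ρ := by
  refine hγ.reverse.exists_subsegment_inNbhd hgeo hhyp z (s := dist o y - t)
    (t := dist o y - s) (by linarith) (by linarith) hs' (by linarith) ?_ hρ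
  rintro _ ⟨r, hr, rfl⟩
  exact hC ⟨dist o y - r, ⟨by linarith [hr.2], by linarith [hr.1]⟩, rfl⟩

end Hyperbolic

section Tripod

/-- The point-set form of `Lemma15Data`, with `|h|_x` written as `dist x₁ x₂`. -/
def IsTripodCenter (x₀ x₁ x₂ r : X) (sxr srg srgh : Set X) : Prop :=
  IsGeodesicSegment sxr x₀ r ∧ IsGeodesicSegment srg r x₁ ∧ IsGeodesicSegment srgh r x₂ ∧
  dist x₀ r + dist r x₁ ≤ dist x₀ x₁ + 2 ∧
  dist x₁ r + dist r x₂ ≤ dist x₁ x₂ + 2 ∧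
  dist x₀ r + dist r x₂ ≤ dist x₀ x₂ + 2 ∧
  (∀ S : Set X, IsGeodesicSegment S x₀ x₁ → InNbhd (sxr ∪ srg) S 2) ∧
  (∀ S : Set X, IsGeodesicSegment S x₁ x₂ → InNbhd (srg ∪ srgh) S 2) ∧
  (∀ S : Set X, IsGeodesicSegment S x₀ x₂ → InNbhd (sxr ∪ srgh) S 2)

-- Alternatives (1) and (2) of `lemma16`, for `x₀, x₁, x₂, x₃ = x, gx, ghx, ghfx`.
def ThinQuadType1 (x₀ x₁ x₂ x₃ p q : X) : Prop :=
  ∃ A B C D E : Set X,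
    IsGeodesicSegment A x₀ p ∧ IsGeodesicSegment B p x₁ ∧
    IsGeodesicSegment C p q ∧ IsGeodesicSegment D q x₂ ∧
    IsGeodesicSegment E q x₃ ∧
    dist x₀ p + dist p x₁ ≤ dist x₀ x₁ + 4 ∧
    dist x₁ p + dist p q + dist q x₂ ≤ dist x₁ x₂ + 4 ∧
    dist x₂ q + dist q x₃ ≤ dist x₂ x₃ + 4 ∧
    dist x₀ p + dist p q + dist q x₃ ≤ dist x₀ x₃ + 4 ∧
    (∀ S : Set X, IsGeodesicSegment S x₀ x₁ → InNbhd (A ∪ B) S 4) ∧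
    (∀ S : Set X, IsGeodesicSegment S x₁ x₂ → InNbhd (B ∪ C ∪ D) S 4) ∧
    (∀ S : Set X, IsGeodesicSegment S x₂ x₃ → InNbhd (D ∪ E) S 4) ∧
    (∀ S : Set X, IsGeodesicSegment S x₀ x₃ → InNbhd (A ∪ C ∪ E) S 4) ∧
    (∀ (r : X) (sxr srg srgh : Set X), IsTripodCenter x₀ x₁ x₂ r sxr srg srgh →
      InNbhd sxr A 5 ∧ InNbhd srg B 5 ∧ InNbhd srgh (C ∪ D) 5)

def ThinQuadType2 (x₀ x₁ x₂ x₃ p q : X) : Prop :=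
  ∃ A C Qg D P : Set X,
    IsGeodesicSegment A x₀ p ∧ IsGeodesicSegment C p q ∧
    IsGeodesicSegment Qg q x₁ ∧ IsGeodesicSegment D q x₂ ∧
    IsGeodesicSegment P p x₃ ∧
    dist x₀ p + dist p q + dist q x₁ ≤ dist x₀ x₁ + 4 ∧
    dist x₁ q + dist q x₂ ≤ dist x₁ x₂ + 4 ∧
    dist x₂ q + dist q p + dist p x₃ ≤ dist x₂ x₃ + 4 ∧
    dist x₀ p + dist p x₃ ≤ dist x₀ x₃ + 4 ∧
    (∀ S : Set X, IsGeodesicSegment S x₀ x₁ → InNbhd C S 4) ∧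
    (∀ S : Set X, IsGeodesicSegment S x₂ x₃ → InNbhd C S 4) ∧
    (∃ Sg : Set X, IsGeodesicSegment Sg x₀ x₁ ∧ ∃ a' ∈ Sg, ∃ b' ∈ Sg,
      ∃ τ : Set X, IsGeodesicSegment τ a' b' ∧ τ ⊆ Sg ∧
        dist p q ≤ dist a' b' ∧ InNbhd τ C 5) ∧
    (∃ Sf : Set X, IsGeodesicSegment Sf x₂ x₃ ∧
      ∃ a' ∈ Sf, ∃ b' ∈ Sf, ∃ τ : Set X, IsGeodesicSegment τ a' b' ∧ τ ⊆ Sf ∧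
        dist p q ≤ dist a' b' ∧ InNbhd τ C 5) ∧
    (∀ S : Set X, IsGeodesicSegment S x₀ x₁ → InNbhd (A ∪ C ∪ Qg) S 4) ∧
    (∀ S : Set X, IsGeodesicSegment S x₁ x₂ → InNbhd (Qg ∪ D) S 4) ∧
    (∀ S : Set X, IsGeodesicSegment S x₂ x₃ → InNbhd (D ∪ C ∪ P) S 4) ∧
    (∀ S : Set X, IsGeodesicSegment S x₀ x₃ → InNbhd (A ∪ P) S 4) ∧
    (∀ (r : X) (sxr srg srgh : Set X), IsTripodCenter x₀ x₁ x₂ r sxr srg srgh →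
      InNbhd sxr (A ∪ C) 5 ∧ InNbhd srg Qg 5 ∧ InNbhd srgh D 5)

variable {x₀ x₁ x₂ x₃ : X} {γ : ℝ → X}

namespace IsTripodCenter

variable {r : X} {sxr srg srgh : Set X}

lemma dist_le_gromovProduct (hr : IsTripodCenter x₀ x₁ x₂ r sxr srg srgh) :
    dist x₀ r ≤ gromovProduct x₀ x₁ x₂ + 2 ∧
      dist r x₂ ≤ dist x₀ x₂ - gromovProduct x₀ x₁ x₂ + 2 := by
  obtain ⟨-, -, -, h₀₁, h₁₂, h₀₂, -⟩ := hr
  have := two_mul_gromovProduct x₀ x₁ x₂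
  constructor <;> linarith [dist_triangle x₁ r x₂, dist_triangle x₀ r x₁, dist_comm x₁ r]

lemma dist_map_gromovProduct_le (hgeo : GeodesicSpace X) (hhyp : DeltaHyperbolic X 1)
    (hr : IsTripodCenter x₀ x₁ x₂ r sxr srg srgh) (hγ : IsGeodesicPath γ x₀ x₂) :
    dist r (γ (gromovProduct x₀ x₁ x₂)) ≤ 4 := by
  obtain ⟨h₀, h₂⟩ := hr.dist_le_gromovProduct
  have := hγ.dist_le_max hgeo hhyp r
    ⟨gromovProduct_nonneg x₀ x₁ x₂, gromovProduct_le_dist_right x₀ x₁ x₂⟩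
  have hmax : max (dist x₀ r - gromovProduct x₀ x₁ x₂)
      (dist r x₂ - (dist x₀ x₂ - gromovProduct x₀ x₁ x₂)) ≤ 2 :=
    max_le (by linarith) (by linarith)
  linarith

lemma inNbhd_leg₀ (hgeo : GeodesicSpace X) (hhyp : DeltaHyperbolic X 1)
    (hr : IsTripodCenter x₀ x₁ x₂ r sxr srg srgh) (hγ : IsGeodesicPath γ x₀ x₂) :
    InNbhd sxr (γ '' Icc 0 (gromovProduct x₀ x₁ x₂)) 5 := by
  have hra := hr.dist_map_gromovProduct_le hgeo hhyp hγ
  have hr₀ := hr.dist_le_gromovProduct.1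
  have ha₀ := gromovProduct_nonneg x₀ x₁ x₂
  set a := gromovProduct x₀ x₁ x₂
  obtain ⟨hsxr, -, -, -, -, -, -, -, hnbhd⟩ := hr
  intro c hc
  obtain ⟨_, ⟨s, hs, rfl⟩, hcs⟩ := hnbhd _ hγ.isGeodesicSegment c (Or.inl hc)
  rcases le_or_gt s a with hsa | has
  · exact ⟨γ s, ⟨s, ⟨hs.1, hsa⟩, rfl⟩, by linarith⟩
  · refine ⟨γ a, ⟨a, ⟨ha₀, le_rfl⟩, rfl⟩, ?_⟩
    -- The detours from `c` to `γ a` through `γ s` and through `r` have total length `≤ 10`.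
    linarith [hsxr.dist_add_dist hc, hγ.dist_left hs, hγ.dist_map_of_le ha₀ has.le hs.2,
      dist_triangle x₀ c (γ s), dist_triangle c (γ s) (γ a), dist_triangle c r (γ a),
      dist_comm (γ a) (γ s)]

lemma inNbhd_leg₁ (hgeo : GeodesicSpace X) (hhyp : DeltaHyperbolic X 1)
    (hr : IsTripodCenter x₀ x₁ x₂ r sxr srg srgh) (hγ : IsGeodesicPath γ x₀ x₂) {B : Set X}
    (hB : IsGeodesicSegment B (γ (gromovProduct x₀ x₁ x₂)) x₁) : InNbhd srg B 5 :=
  hr.2.1.inNbhd_of_dist_le hgeo hhyp hB (inNbhd_self B (by norm_num)) hB.left_mem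
    (hr.dist_map_gromovProduct_le hgeo hhyp hγ) (by norm_num)

lemma inNbhd_leg₂ (hgeo : GeodesicSpace X) (hhyp : DeltaHyperbolic X 1)
    (hr : IsTripodCenter x₀ x₁ x₂ r sxr srg srgh) (hγ : IsGeodesicPath γ x₀ x₂) {S B : Set X}
    (hS : IsGeodesicSegment S (γ (gromovProduct x₀ x₁ x₂)) x₂) (hSB : InNbhd S B 4)
    (hB : γ (gromovProduct x₀ x₁ x₂) ∈ B) : InNbhd srgh B 5 :=
  hr.2.2.1.inNbhd_of_dist_le hgeo hhyp hS hSB hB (hr.dist_map_gromovProduct_le hgeo hhyp hγ)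
    (by norm_num)

end IsTripodCenter

lemma thinQuadType1_of_le (hgeo : GeodesicSpace X) (hhyp : DeltaHyperbolic X 1)
    (hγ : IsGeodesicPath γ x₀ x₂) (hab : gromovProduct x₀ x₁ x₂ ≤ gromovProduct x₀ x₂ x₃) :
    ThinQuadType1 x₀ x₁ x₂ x₃ (γ (gromovProduct x₀ x₁ x₂)) (γ (gromovProduct x₀ x₂ x₃)) := by
  have ha := two_mul_gromovProduct x₀ x₁ x₂
  have hb := two_mul_gromovProduct x₀ x₂ x₃
  have ha₀ := gromovProduct_nonneg x₀ x₁ x₂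
  have hb₂ := gromovProduct_le_dist_left x₀ x₂ x₃
  have hp₁ := hγ.dist_le_of_le_gromovProduct hgeo hhyp ha₀ le_rfl
  have hq₃ := hγ.dist_le_of_le_gromovProduct hgeo hhyp (w := x₃) (ha₀.trans hab)
    (gromovProduct_comm x₀ x₂ x₃).le
  set a := gromovProduct x₀ x₁ x₂
  set b := gromovProduct x₀ x₂ x₃
  have hxp := hγ.dist_left ⟨ha₀, hab.trans hb₂⟩
  have hqx₂ := hγ.dist_right ⟨ha₀.trans hab, hb₂⟩
  have hpq := hγ.dist_map_of_le ha₀ hab hb₂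
  have hA : IsGeodesicSegment (γ '' Icc 0 a) x₀ (γ a) :=
    hγ.map_zero ▸ hγ.isGeodesicSegment_Icc le_rfl ha₀ (hab.trans hb₂)
  have hC := hγ.isGeodesicSegment_Icc ha₀ hab hb₂
  obtain ⟨B, hB⟩ := hgeo (γ a) x₁
  obtain ⟨D, hD⟩ := hgeo (γ b) x₂
  obtain ⟨E, hE⟩ := hgeo (γ b) x₃
  obtain ⟨S, hS⟩ := hgeo (γ a) x₂
  have L₁ : dist x₀ (γ a) + dist (γ a) x₁ ≤ dist x₀ x₁ + 4 := by
    linarith [dist_comm x₁ (γ a)]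
  have L₂ : dist x₁ (γ a) + dist (γ a) (γ b) + dist (γ b) x₂ ≤ dist x₁ x₂ + 4 := by linarith
  have L₃ : dist x₂ (γ b) + dist (γ b) x₃ ≤ dist x₂ x₃ + 4 := by
    linarith [dist_comm x₂ (γ b), dist_comm x₃ (γ b)]
  have L₄ : dist x₀ (γ a) + dist (γ a) (γ b) + dist (γ b) x₃ ≤ dist x₀ x₃ + 4 := by
    linarith [dist_comm x₃ (γ b)]
  refine ⟨_, B, _, D, E, hA, hB, hC, hD, hE, L₁, L₂, L₃, L₄,
    inNbhd_union_of_dist_add_dist_le hgeo hhyp hA hB L₁ (by norm_num),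
    inNbhd_union_union_of_dist_add_dist_add_dist_le hgeo hhyp hB.symm hC hD L₂ (by norm_num),
    inNbhd_union_of_dist_add_dist_le hgeo hhyp hD.symm hE L₃ (by norm_num),
    inNbhd_union_union_of_dist_add_dist_add_dist_le hgeo hhyp hA hC hE L₄ (by norm_num),
    fun r sxr srg srgh hr => ⟨hr.inNbhd_leg₀ hgeo hhyp hγ, hr.inNbhd_leg₁ hgeo hhyp hγ hB,
      hr.inNbhd_leg₂ hgeo hhyp hγ hS ?_ (Or.inl hC.left_mem)⟩⟩
  exact (hhyp _ _ _ S _ D hS hC hD.symm).mono subset_rfl subset_rfl (by norm_num)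

lemma thinQuadType2_of_le (hgeo : GeodesicSpace X) (hhyp : DeltaHyperbolic X 1)
    (hγ : IsGeodesicPath γ x₀ x₂) (hba : gromovProduct x₀ x₂ x₃ ≤ gromovProduct x₀ x₁ x₂) :
    ThinQuadType2 x₀ x₁ x₂ x₃ (γ (gromovProduct x₀ x₂ x₃)) (γ (gromovProduct x₀ x₁ x₂)) := by
  have ha := two_mul_gromovProduct x₀ x₁ x₂
  have hb := two_mul_gromovProduct x₀ x₂ x₃
  have hb₀ := gromovProduct_nonneg x₀ x₂ x₃
  have ha₂ := gromovProduct_le_dist_right x₀ x₁ x₂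
  have hq₁ := hγ.dist_le_of_le_gromovProduct hgeo hhyp (hb₀.trans hba) le_rfl
  have hp₃ := hγ.dist_le_of_le_gromovProduct hgeo hhyp (w := x₃) hb₀
    (gromovProduct_comm x₀ x₂ x₃).le
  set a := gromovProduct x₀ x₁ x₂
  set b := gromovProduct x₀ x₂ x₃
  have hxp := hγ.dist_left ⟨hb₀, hba.trans ha₂⟩
  have hqx₂ := hγ.dist_right ⟨hb₀.trans hba, ha₂⟩
  have hpq := hγ.dist_map_of_le hb₀ hba ha₂
  have hA : IsGeodesicSegment (γ '' Icc 0 b) x₀ (γ b) :=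
    hγ.map_zero ▸ hγ.isGeodesicSegment_Icc le_rfl hb₀ (hba.trans ha₂)
  have hC := hγ.isGeodesicSegment_Icc hb₀ hba ha₂
  have hD : IsGeodesicSegment (γ '' Icc a (dist x₀ x₂)) (γ a) x₂ :=
    by simpa only [hγ.map_dist] using hγ.isGeodesicSegment_Icc (hb₀.trans hba) ha₂ le_rfl
  obtain ⟨Qg, hQg⟩ := hgeo (γ a) x₁
  obtain ⟨P, hP⟩ := hgeo (γ b) x₃
  have L₁ : dist x₀ (γ b) + dist (γ b) (γ a) + dist (γ a) x₁ ≤ dist x₀ x₁ + 4 := by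
    linarith [dist_comm x₁ (γ a)]
  have L₂ : dist x₁ (γ a) + dist (γ a) x₂ ≤ dist x₁ x₂ + 4 := by linarith
  have L₃ : dist x₂ (γ a) + dist (γ a) (γ b) + dist (γ b) x₃ ≤ dist x₂ x₃ + 4 := by
    linarith [dist_comm x₂ (γ a), dist_comm (γ a) (γ b), dist_comm x₃ (γ b)]
  have L₄ : dist x₀ (γ b) + dist (γ b) x₃ ≤ dist x₀ x₃ + 4 := by
    linarith [dist_comm x₃ (γ b)]
  have hw₁ := inNbhd_union_union_of_dist_add_dist_add_dist_le hgeo hhyp (r := 4) hA hC hQg L₁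
    (by norm_num)
  have hw₃ := inNbhd_union_union_of_dist_add_dist_add_dist_le hgeo hhyp (r := 4) hD.symm hC.symm
    hP L₃ (by norm_num)
  refine ⟨_, _, Qg, _, P, hA, hC, hQg, hD, hP, L₁, L₂, L₃, L₄,
    fun S hS => (hw₁ S hS).mono (subset_union_right.trans subset_union_left) subset_rfl le_rfl,
    fun S hS => (hw₃ S hS).mono (subset_union_right.trans subset_union_left) subset_rfl le_rfl,
    hγ.exists_subsegment_inNbhd hgeo hhyp x₁ hb₀ hba (gromovProduct_comm x₀ x₁ x₂).le
      hpq.le subset_rfl (by norm_num),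
    hγ.exists_subsegment_inNbhd_rev hgeo hhyp x₃ hb₀ hba ha₂
      (by linarith [two_mul_gromovProduct x₂ x₀ x₃, dist_comm x₂ x₀]) hpq.le subset_rfl
      (by norm_num),
    hw₁, inNbhd_union_of_dist_add_dist_le hgeo hhyp hQg.symm hD L₂ (by norm_num), hw₃,
    inNbhd_union_of_dist_add_dist_le hgeo hhyp hA hP L₄ (by norm_num),
    fun r sxr srg srgh hr => ⟨?_, hr.inNbhd_leg₁ hgeo hhyp hγ hQg,
      hr.inNbhd_leg₂ hgeo hhyp hγ hD (inNbhd_self _ (by norm_num)) hD.left_mem⟩⟩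
  rw [← image_union, Icc_union_Icc_eq_Icc hb₀ hba]
  exact hr.inNbhd_leg₀ hgeo hhyp hγ

end Tripod

end ThinQuadrilaterals

/-- **Lemma 16.** For `g, h, f ∈ G` acting by isometries on a `1`-hyperbolic geodesic
space with base point `x`, there are points `p, q` realizing one of the two types of
thin quadrilaterals for the product `ghf`, with all the length, neighborhood, and
compatibility (with any Lemma 15 data for the pair `(g,h)`) conditions. -/
theorem lemma16
    (G : Type*) [Group G] (X : Type*) [MetricSpace X] [MulAction G X]
    (hgeo : GeodesicSpace X) (hhyp : DeltaHyperbolic X 1)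
    (hiso : ∀ (g : G) (a b : X), dist (g • a) (g • b) = dist a b)
    (x : X) (g h f : G) :
    ∃ p q : X,
      -- Case (1): first type of thin quadrilateral
      (∃ A B C D E : Set X,
        IsGeodesicSegment A x p ∧ IsGeodesicSegment B p (g • x) ∧
        IsGeodesicSegment C p q ∧ IsGeodesicSegment D q ((g * h) • x) ∧
        IsGeodesicSegment E q ((g * h * f) • x) ∧
        dist x p + dist p (g • x) ≤ dist x (g • x) + 4 ∧
        dist (g • x) p + dist p q + dist q ((g * h) • x) ≤ dist x (h • x) + 4 ∧
        dist ((g * h) • x) q + dist q ((g * h * f) • x) ≤ dist x (f • x) + 4 ∧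
        dist x p + dist p q + dist q ((g * h * f) • x) ≤ dist x ((g * h * f) • x) + 4 ∧
        (∀ S : Set X, IsGeodesicSegment S x (g • x) → InNbhd (A ∪ B) S 4) ∧
        (∀ S : Set X, IsGeodesicSegment S (g • x) ((g * h) • x) → InNbhd (B ∪ C ∪ D) S 4) ∧
        (∀ S : Set X, IsGeodesicSegment S ((g * h) • x) ((g * h * f) • x) →
          InNbhd (D ∪ E) S 4) ∧
        (∀ S : Set X, IsGeodesicSegment S x ((g * h * f) • x) → InNbhd (A ∪ C ∪ E) S 4) ∧
        (∀ (r : X) (sxr srg srgh : Set X), Lemma15Data x g h r sxr srg srgh →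
          InNbhd sxr A 5 ∧ InNbhd srg B 5 ∧ InNbhd srgh (C ∪ D) 5)) ∨
      -- Case (2): second type of thin quadrilateral
      (∃ A C Qg D P : Set X,
        IsGeodesicSegment A x p ∧ IsGeodesicSegment C p q ∧
        IsGeodesicSegment Qg q (g • x) ∧ IsGeodesicSegment D q ((g * h) • x) ∧
        IsGeodesicSegment P p ((g * h * f) • x) ∧
        dist x p + dist p q + dist q (g • x) ≤ dist x (g • x) + 4 ∧
        dist (g • x) q + dist q ((g * h) • x) ≤ dist x (h • x) + 4 ∧
        dist ((g * h) • x) q + dist q p + dist p ((g * h * f) • x) ≤ dist x (f • x) + 4 ∧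
        dist x p + dist p ((g * h * f) • x) ≤ dist x ((g * h * f) • x) + 4 ∧
        (∀ S : Set X, IsGeodesicSegment S x (g • x) → InNbhd C S 4) ∧
        (∀ S : Set X, IsGeodesicSegment S ((g * h) • x) ((g * h * f) • x) → InNbhd C S 4) ∧
        (∃ Sg : Set X, IsGeodesicSegment Sg x (g • x) ∧ ∃ a' ∈ Sg, ∃ b' ∈ Sg,
          ∃ τ : Set X, IsGeodesicSegment τ a' b' ∧ τ ⊆ Sg ∧
            dist p q ≤ dist a' b' ∧ InNbhd τ C 5) ∧
        (∃ Sf : Set X, IsGeodesicSegment Sf ((g * h) • x) ((g * h * f) • x) ∧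
          ∃ a' ∈ Sf, ∃ b' ∈ Sf, ∃ τ : Set X, IsGeodesicSegment τ a' b' ∧ τ ⊆ Sf ∧
            dist p q ≤ dist a' b' ∧ InNbhd τ C 5) ∧
        (∀ S : Set X, IsGeodesicSegment S x (g • x) → InNbhd (A ∪ C ∪ Qg) S 4) ∧
        (∀ S : Set X, IsGeodesicSegment S (g • x) ((g * h) • x) → InNbhd (Qg ∪ D) S 4) ∧
        (∀ S : Set X, IsGeodesicSegment S ((g * h) • x) ((g * h * f) • x) →
          InNbhd (D ∪ C ∪ P) S 4) ∧
        (∀ S : Set X, IsGeodesicSegment S x ((g * h * f) • x) → InNbhd (A ∪ P) S 4) ∧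
        (∀ (r : X) (sxr srg srgh : Set X), Lemma15Data x g h r sxr srg srgh →
          InNbhd sxr (A ∪ C) 5 ∧ InNbhd srg Qg 5 ∧ InNbhd srgh D 5)) := by
  have hh : dist (g • x) ((g * h) • x) = dist x (h • x) := by rw [mul_smul, hiso]
  have hf : dist ((g * h) • x) ((g * h * f) • x) = dist x (f • x) := by
    rw [mul_smul (g * h), hiso]
  obtain ⟨γ, hγ⟩ := hgeo.exists_isGeodesicPath x ((g * h) • x)
  simp only [Lemma15Data, ← hh, ← hf]
  rcases le_total (gromovProduct x (g • x) ((g * h) • x))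
    (gromovProduct x ((g * h) • x) ((g * h * f) • x)) with hab | hba
  · exact ⟨_, _, Or.inl (thinQuadType1_of_le hgeo hhyp hγ hab)⟩
  · exact ⟨_, _, Or.inr (thinQuadType2_of_le hgeo hhyp hγ hba)⟩
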